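/- arXiv:1101.3045 — 3 statements merged into one kernel-verified Lean document; each statement's English description precedes it below -/
import Mathlib

section
/- Let k be a field of characteristic p > 0 and K a separably generated function field over k (i.e. K is finite separable over k(t) for some t ∈ K). Then for every n > 0, K ∩ k̄K^{p^n} = kK^{p^n}, where k̄ is an algebraic closure of k and the intersection is taken inside k̄K = the compositum. -/
/-!
Write `T` for the image of `t`, `R = kK^{p^n}` and `F = k̄K^{p^n}`. Since `K/k(t)` is separable,
`K = k(t, K^{p^n})`, so `K ⊆ R(T)`, and `T` is a root of `X^{p^n} - T^{p^n} ∈ R[X]`. Over `F`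
the minimal polynomial of `T` still has degree `p^n`: otherwise `T^{p^{n-1}} ∈ F = (k̄K)^{p^n}`
(as `k̄` is perfect), which produces a `p`-th root of `T` in `k̄K`. Such a root is separable over
`k̄(T)`, because `k̄K/k̄(T)` is, and purely inseparable over it, so it lies in `k̄(T)`; but `T` is
transcendental over `k̄` and has no `p`-th root in `k̄(T)`. Hence the powers of `T` stay linearly
independent over `F`, i.e. `R(T)` and `F` are linearly disjoint over `R`, and
`K ∩ F ⊆ R(T) ∩ F = R`.
-/

open IntermediateField Polynomial

theorem Transcendental.pow_ne_of_mem_adjoin_simple {F E : Type*} [Field F] [Field E]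
    [Algebra F E] {x : E} (hx : Transcendental F x) {m : ℕ} (hm : 2 ≤ m) {e : E}
    (he : e ∈ F⟮x⟯) : e ^ m ≠ x := by
  intro hem
  obtain ⟨r, s, rfl⟩ := (mem_adjoin_simple_iff F _).1 he
  have hs : Polynomial.aeval x s ≠ 0 := by
    rintro hs
    rw [hs, div_zero, zero_pow (by omega)] at hem
    exact hx (hem ▸ isAlgebraic_zero)
  have hs0 : s ≠ 0 := by rintro rfl; simp at hs
  have hpoly : r ^ m = X * s ^ m := by
    apply transcendental_iff_injective.1 hx
    rw [div_pow, div_eq_iff (pow_ne_zero _ hs)] at hem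
    simp [hem]
  have hr0 : r ≠ 0 := by
    rintro rfl
    simp [zero_pow (show m ≠ 0 by omega), X_ne_zero, hs0] at hpoly
  have hdeg := congrArg natDegree hpoly
  rw [natDegree_pow, natDegree_mul X_ne_zero (pow_ne_zero _ hs0), natDegree_pow,
    natDegree_X] at hdeg
  have : m ∣ 1 := (Nat.dvd_add_left (dvd_mul_right m _)).1 (hdeg ▸ dvd_mul_right m _)
  have := Nat.le_of_dvd one_pos this
  omega

theorem mem_range_of_isSeparable_of_pow_mem {F E : Type*} [Field F] [Field E] [Algebra F E]
    (q : ℕ) [ExpChar F q] {x : E} (hs : IsSeparable F x) {n : ℕ}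
    (h : x ^ q ^ n ∈ (algebraMap F E).range) : x ∈ (algebraMap F E).range :=
  mem_bot.1 <| separableClosure_inf_perfectClosure F E ▸
    ⟨mem_separableClosure_iff.2 hs, (mem_perfectClosure_iff_pow_mem q).2 ⟨n, h⟩⟩

theorem natDegree_minpoly_le_of_pow_mem {F E : Type*} [Field F] [Field E] [Algebra F E]
    {x : E} {m : ℕ} (hm : 0 < m) (h : x ^ m ∈ (algebraMap F E).range) :
    (minpoly F x).natDegree ≤ m := by
  obtain ⟨y, hy⟩ := h
  have hroot : aeval x (X ^ m - C y) = 0 := by simp [hy]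
  simpa using natDegree_le_of_dvd (minpoly.dvd F x hroot) (X_pow_sub_C_ne_zero hm y)

theorem pow_succ_le_natDegree_minpoly {F E : Type*} [Field F] [Field E] [Algebra F E]
    (q : ℕ) [ExpChar F q] {x : E} {m n : ℕ} (hm : x ^ q ^ m ∈ (algebraMap F E).range)
    (hn : x ^ q ^ n ∉ (algebraMap F E).range) : q ^ (n + 1) ≤ (minpoly F x).natDegree := by
  obtain ⟨l, y, hmin⟩ := (minpoly.natSepDegree_eq_one_iff_eq_X_pow_sub_C q).1
    ((minpoly.natSepDegree_eq_one_iff_pow_mem q).2 ⟨m, hm⟩)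
  have hl : x ^ q ^ l = algebraMap F E y := by
    simpa [hmin, sub_eq_zero] using minpoly.aeval F x
  have hnl : n < l := by
    by_contra! hln
    refine hn ⟨y ^ q ^ (n - l), ?_⟩
    rw [map_pow, ← hl, ← pow_mul, ← pow_add, Nat.add_sub_cancel' hln]
  rw [hmin, natDegree_X_pow_sub_C]
  exact Nat.pow_le_pow_right (expChar_pos F q) hnl

theorem adjoin_simple_inf_eq_bot_of_natDegree_minpoly_le {F E : Type*} [Field F] [Field E]
    [Algebra F E] {x : E} (hx : IsIntegral F x) {B : IntermediateField F E}
    (h : (minpoly F x).natDegree ≤ (minpoly B x).natDegree) : F⟮x⟯ ⊓ B = ⊥ := by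
  refine LinearDisjoint.inf_eq_bot (.of_basis_left (adjoin.powerBasis hx).basis ?_)
  have hpow : F⟮x⟯.val ∘ (adjoin.powerBasis hx).basis =
      fun i : Fin (minpoly F x).natDegree ↦ x ^ (i : ℕ) := by
    ext i; simp [PowerBasis.coe_basis]
  rw [hpow]
  exact (linearIndependent_pow (K := B) x).comp (Fin.castLE h) (Fin.castLE_injective h)

theorem adjoin_insert_range_pow_eq_top {k K : Type*} [Field k] [Field K] [Algebra k K]
    {t : K} [Algebra.IsSeparable k⟮t⟯ K] (q : ℕ) [ExpChar K q] (n : ℕ) :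
    adjoin k (insert t (Set.range (· ^ q ^ n))) = ⊤ := by
  have h := adjoin_eq_adjoin_pow_expChar_pow_of_isSeparable' k⟮t⟯ K Set.univ q n
  rw [adjoin_univ, Set.image_univ] at h
  rw [Set.insert_eq, ← adjoin_adjoin_left, ← h, restrictScalars_top]

theorem isSeparable_of_mem_closure_union_range {A K Ω : Type*} [Field A] [Field K] [Field Ω]
    [Algebra A K] [Algebra K Ω] [Algebra A Ω] [IsScalarTower A K Ω] [Algebra.IsSeparable A K]
    (S : Set Ω) {e : Ω} (he : e ∈ Subfield.closure (S ∪ Set.range (algebraMap K Ω))) :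
    IsSeparable (adjoin A S) e := by
  have hsep (y : K) : IsSeparable (adjoin A S) (algebraMap K Ω y) := by
    have : IsSeparable A (algebraMap K Ω y) := by
      rw [IsSeparable, minpoly.algebraMap_eq (algebraMap K Ω).injective]
      exact Algebra.IsSeparable.isSeparable A y
    exact this.tower_top _
  refine mem_separableClosure_iff.1 <| adjoin_le_iff.2 ?_ <|
    (Subfield.closure_le (t := (adjoin (adjoin A S) (Set.range (algebraMap K Ω))).toSubfield)).2
      ?_ he
  · rintro _ ⟨y, rfl⟩
    exact mem_separableClosure_iff.2 (hsep y)
  · rintro x (hx | hx)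
    · exact (adjoin (adjoin A S) _).algebraMap_mem ⟨x, subset_adjoin A S hx⟩
    · exact subset_adjoin _ _ hx

section Tower

variable {k K Ω : Type*} [Field k] [Field K] [Field Ω] [Algebra k K] [Algebra K Ω] [Algebra k Ω]
  [IsScalarTower k K Ω]

theorem algebraMap_mem_adjoin_insert_pow {t : K} [Algebra.IsSeparable k⟮t⟯ K] (q : ℕ)
    [ExpChar K q] (n : ℕ) (y : K) :
    algebraMap K Ω y ∈ adjoin k
      (insert (algebraMap K Ω t) {z | ∃ x : K, algebraMap K Ω (x ^ q ^ n) = z}) := by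
  have hmap := congrArg (map (IsScalarTower.toAlgHom k K Ω))
    (adjoin_insert_range_pow_eq_top (k := k) (t := t) q n)
  rw [adjoin_map, Set.image_insert_eq, ← Set.range_comp] at hmap
  simp only [Function.comp_def, IsScalarTower.coe_toAlgHom'] at hmap
  exact hmap ▸ (mem_map _).2 ⟨y, mem_top, rfl⟩

theorem pow_ne_of_mem_closure_algebraicClosure_union_range {t : K} (ht : Transcendental k t)
    [Algebra.IsSeparable k⟮t⟯ K] (p : ℕ) [Fact p.Prime] [CharP Ω p] {e : Ω}
    (he : e ∈ Subfield.closure ((algebraicClosure k Ω : Set Ω) ∪ Set.range (algebraMap K Ω))) :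
    e ^ p ≠ algebraMap K Ω t := by
  intro hep
  set T := algebraMap K Ω t
  set κ := algebraicClosure k Ω
  -- `M = k̄(T)`, taken over `k(t)` so that separability of `K/k(t)` passes to `k̄K/M`.
  let M : IntermediateField k⟮t⟯ Ω := adjoin k⟮t⟯ κ
  have hTM : T ∈ M := M.algebraMap_mem ⟨t, mem_adjoin_simple_self k t⟩
  have he_sep := isSeparable_of_mem_closure_union_range (A := k⟮t⟯) (κ : Set Ω) he
  have heM : e ∈ M := by
    obtain ⟨e', he'⟩ := mem_range_of_isSeparable_of_pow_mem p he_sep (n := 1)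
      ⟨⟨T, hTM⟩, by simp [hep]⟩
    exact he' ▸ e'.2
  have hMκ : M.toSubfield ≤ (adjoin κ {T}).toSubfield := by
    rw [adjoin_toSubfield]
    refine Subfield.closure_le.2
      (Set.union_subset ?_ fun x hx ↦ (adjoin κ {T}).algebraMap_mem ⟨x, hx⟩)
    rintro _ ⟨⟨a, ha⟩, rfl⟩
    have hle : adjoin k {T} ≤ (adjoin κ {T}).restrictScalars k :=
      adjoin_simple_le_iff.2 (mem_adjoin_simple_self κ T)
    refine hle ?_
    rw [← Set.image_singleton, ← IsScalarTower.coe_toAlgHom' k K Ω, ← adjoin_map]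
    exact (mem_map _).2 ⟨a, ha, rfl⟩
  have hTκ : Transcendental κ T :=
    ((transcendental_algebraMap_iff (algebraMap K Ω).injective).2 ht).extendScalars κ
  exact hTκ.pow_ne_of_mem_adjoin_simple (Fact.out : p.Prime).two_le (hMκ heM) hep

theorem pow_notMem_closure_algebraicClosure_union_pow [IsAlgClosed Ω] {t : K}
    (ht : Transcendental k t) [Algebra.IsSeparable k⟮t⟯ K] (p : ℕ) [Fact p.Prime] [CharP Ω p]
    (m : ℕ) :
    algebraMap K Ω t ^ p ^ m ∉ Subfield.closure ((algebraicClosure k Ω : Set Ω) ∪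
      {y | ∃ x : K, algebraMap K Ω (x ^ p ^ (m + 1)) = y}) := by
  intro hmem
  have hpos : 0 < p ^ (m + 1) := pow_pos (Fact.out : p.Prime).pos _
  -- `k̄` is perfect, so it consists of `p ^ (m + 1)`-th powers of elements of `k̄K`.
  have hle : Subfield.closure ((algebraicClosure k Ω : Set Ω) ∪
      {y | ∃ x : K, algebraMap K Ω (x ^ p ^ (m + 1)) = y}) ≤
      (Subfield.closure ((algebraicClosure k Ω : Set Ω) ∪ Set.range (algebraMap K Ω))).map
        (iterateFrobenius Ω p (m + 1)) := by
    refine Subfield.closure_le.2 (Set.union_subset ?_ ?_)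
    · intro x hx
      obtain ⟨z, hz⟩ := IsAlgClosed.exists_pow_nat_eq x hpos
      have hzκ : z ∈ algebraicClosure k Ω := IsIntegral.of_pow hpos (hz ▸ hx)
      exact ⟨z, Subfield.subset_closure (Or.inl hzκ), by rw [iterateFrobenius_def, hz]⟩
    · rintro _ ⟨y, rfl⟩
      exact ⟨algebraMap K Ω y, Subfield.subset_closure (Or.inr ⟨y, rfl⟩),
        by rw [iterateFrobenius_def, map_pow]⟩
  obtain ⟨e, he, hFe⟩ := hle hmem
  refine pow_ne_of_mem_closure_algebraicClosure_union_range ht p he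
    (iterateFrobenius_inj Ω p m ?_)
  rwa [iterateFrobenius_def, iterateFrobenius_def, ← pow_mul, ← pow_succ',
    ← iterateFrobenius_def p (m + 1)]

theorem adjoin_toSubfield_le_closure_algebraicClosure_union (S : Set Ω) :
    (adjoin k S).toSubfield ≤ Subfield.closure ((algebraicClosure k Ω : Set Ω) ∪ S) :=
  Subfield.closure_mono (Set.union_subset_union_left _
    fun _ ⟨c, hc⟩ ↦ hc ▸ (algebraicClosure k Ω).algebraMap_mem c)

theorem algebraMap_mem_adjoin_of_mem_closure_algebraicClosure_union_pow [IsAlgClosed Ω]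
    {t : K} (ht : Transcendental k t) [Algebra.IsSeparable k⟮t⟯ K] (p : ℕ) [Fact p.Prime]
    [CharP K p] (m : ℕ) {y : K}
    (hy : algebraMap K Ω y ∈ Subfield.closure ((algebraicClosure k Ω : Set Ω) ∪
      {z | ∃ x : K, algebraMap K Ω (x ^ p ^ (m + 1)) = z})) :
    algebraMap K Ω y ∈ adjoin k {z | ∃ x : K, algebraMap K Ω (x ^ p ^ (m + 1)) = z} := by
  have : CharP Ω p := charP_of_injective_algebraMap (algebraMap K Ω).injective p
  set P := {z : Ω | ∃ x : K, algebraMap K Ω (x ^ p ^ (m + 1)) = z}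
  set T := algebraMap K Ω t
  set R := adjoin k P
  have hRF := adjoin_toSubfield_le_closure_algebraicClosure_union (k := k) P
  let F : IntermediateField R Ω := Subfield.toIntermediateField _ fun r ↦ hRF r.2
  have hpos : 0 < p ^ (m + 1) := pow_pos (Fact.out : p.Prime).pos _
  have hTR : T ^ p ^ (m + 1) ∈ R := subset_adjoin k P ⟨t, map_pow _ _ _⟩
  have hTF : T ^ p ^ m ∉ (algebraMap F Ω).range := by
    rintro ⟨b, hb⟩
    exact pow_notMem_closure_algebraicClosure_union_pow ht p m (hb ▸ b.2 : _ ∈ F)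
  have hdisj : R⟮T⟯ ⊓ F = ⊥ := adjoin_simple_inf_eq_bot_of_natDegree_minpoly_le
    (.of_pow hpos (isIntegral_algebraMap (R := R) (x := ⟨_, hTR⟩)))
    ((natDegree_minpoly_le_of_pow_mem hpos ⟨⟨_, hTR⟩, rfl⟩).trans
      (pow_succ_le_natDegree_minpoly p ⟨⟨_, hRF hTR⟩, rfl⟩ hTF))
  have hyRT : algebraMap K Ω y ∈ R⟮T⟯ := by
    have := algebraMap_mem_adjoin_insert_pow (k := k) (Ω := Ω) (t := t) p (m + 1) y
    rwa [Set.insert_eq, Set.union_comm, ← adjoin_adjoin_left] at this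
  obtain ⟨r, hr⟩ := mem_bot.1 (hdisj ▸ mem_inf.2 ⟨hyRT, hy⟩)
  exact hr ▸ r.2

end Tower

/-- `k` of characteristic `p > 0`, `K` a separably generated function field
over `k` (so `K` is finite separable over `k(t)` for some transcendental `t ∈ K`).  Inside
any algebraically closed field `Ω` containing `K` (so that `k̄K ⊆ Ω`, where
`k̄ = {x ∈ Ω | x algebraic over k}`), one has `K ∩ k̄K^{p^n} = kK^{p^n}` for every
`n > 0`; composita are the subfields of `Ω` generated by the indicated subsets. -/
theorem stmt4 {k K : Type*} [Field k] [Field K] [Algebra k K]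
    (p : ℕ) [Fact p.Prime] [CharP K p]
    (hsepgen : ∃ t : K, Transcendental k t ∧
      FiniteDimensional ↥(IntermediateField.adjoin k {t}) K ∧
      Algebra.IsSeparable ↥(IntermediateField.adjoin k {t}) K)
    (n : ℕ) (hn : 0 < n)
    (Ω : Type*) [Field Ω] [Algebra K Ω] [Algebra k Ω] [IsScalarTower k K Ω]
    [IsAlgClosed Ω] :
    (algebraMap K Ω).fieldRange ⊓
      Subfield.closure
        ({x : Ω | IsAlgebraic k x} ∪ {y : Ω | ∃ x : K, algebraMap K Ω (x ^ p ^ n) = y})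
    = Subfield.closure
        (Set.range (algebraMap k Ω) ∪
          {y : Ω | ∃ x : K, algebraMap K Ω (x ^ p ^ n) = y}) := by
  obtain ⟨t, ht, -, hsep⟩ := hsepgen
  obtain ⟨m, rfl⟩ : ∃ m, n = m + 1 := ⟨n - 1, by omega⟩
  have hκ : {x : Ω | IsAlgebraic k x} = algebraicClosure k Ω :=
    Set.ext fun _ ↦ mem_algebraicClosure_iff.symm
  rw [hκ]
  refine le_antisymm ?_ (le_inf ?_ (adjoin_toSubfield_le_closure_algebraicClosure_union _))
  · rintro _ ⟨⟨y, rfl⟩, hy⟩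
    exact algebraMap_mem_adjoin_of_mem_closure_algebraicClosure_union_pow ht p m hy
  · refine Subfield.closure_le.2 (Set.union_subset ?_ ?_)
    · rintro _ ⟨c, rfl⟩
      exact ⟨algebraMap k K c, (IsScalarTower.algebraMap_apply k K Ω c).symm⟩
    · rintro _ ⟨x, rfl⟩
      exact ⟨x ^ p ^ (m + 1), rfl⟩
end

section
/- Let k be a field of characteristic p > 0 and K a separably generated function field over k, and let k^sep be the separable closure of k. Then for every n > 0, K ∩ k^sep K^{p^n} = kK^{p^n}. -/
/-!
Put `F = kK^{p^n}`. The field `k^sep K^{p^n}` is generated over `F` by elements separable over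
`k ⊆ F`, so it is separable over `F`; on the other hand every `x ∈ K` has `x^{p^n} ∈ F`, so `K` is
purely inseparable over `F`. An element that is both separable and purely inseparable over `F`
lies in `F`.
-/

theorem IsSeparable.mem_range_of_pow_mem {F E : Type*} [Field F] [Field E] [Algebra F E]
    (q : ℕ) [ExpChar F q] {x : E} (hsep : IsSeparable F x) (m : ℕ)
    (hpow : x ^ q ^ m ∈ (algebraMap F E).range) : x ∈ (algebraMap F E).range := by
  have hx : x ∈ separableClosure F E ⊓ perfectClosure F E :=
    ⟨mem_separableClosure_iff.2 hsep, (mem_perfectClosure_iff_pow_mem q).2 ⟨m, hpow⟩⟩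
  rw [separableClosure_inf_perfectClosure] at hx
  exact IntermediateField.mem_bot.1 hx

theorem Subfield.closure_setOf_isSeparable_union_le_separableClosure {k Ω : Type*} [Field k]
    [Field Ω] [Algebra k Ω] (L : IntermediateField k Ω) {P : Set Ω} (hP : P ⊆ L) :
    Subfield.closure ({x : Ω | IsSeparable k x} ∪ P) ≤ (separableClosure L Ω).toSubfield := by
  refine Subfield.closure_le.2 ?_
  rintro y (hy | hy)
  · exact mem_separableClosure_iff.2 (IsSeparable.tower_top L hy)
  · exact (separableClosure L Ω).algebraMap_mem ⟨y, hP hy⟩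

theorem stmt5_general {k K : Type*} [Field k] [Field K] [Algebra k K]
    (p : ℕ) [Fact p.Prime] [CharP K p]
    (n : ℕ)
    (Ω : Type*) [Field Ω] [Algebra K Ω] [Algebra k Ω] [IsScalarTower k K Ω] :
    (algebraMap K Ω).fieldRange ⊓
      Subfield.closure
        ({x : Ω | IsIntegral k x ∧ (minpoly k x).Separable} ∪
          {y : Ω | ∃ x : K, algebraMap K Ω (x ^ p ^ n) = y})
    = Subfield.closure
        (Set.range (algebraMap k Ω) ∪
          {y : Ω | ∃ x : K, algebraMap K Ω (x ^ p ^ n) = y}) := by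
  set P : Set Ω := {y : Ω | ∃ x : K, algebraMap K Ω (x ^ p ^ n) = y}
  set F : Subfield Ω := Subfield.closure (Set.range (algebraMap k Ω) ∪ P)
  let L : IntermediateField k Ω :=
    F.toIntermediateField fun c ↦ Subfield.subset_closure (Or.inl ⟨c, rfl⟩)
  have : CharP Ω p := charP_of_injective_algebraMap (algebraMap K Ω).injective p
  have : CharP L p := (algebraMap L Ω).charP Subtype.val_injective p
  have : ExpChar L p := ExpChar.prime Fact.out
  refine le_antisymm ?_ (le_inf ?_ (Subfield.closure_mono ?_))
  · rintro _ ⟨⟨a, rfl⟩, ha⟩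
    have hsep : IsSeparable L (algebraMap K Ω a) :=
      Subfield.closure_setOf_isSeparable_union_le_separableClosure L
        (fun _ hy ↦ Subfield.subset_closure (Or.inr hy))
        (Subfield.closure_mono (Set.union_subset_union_left _ fun _ hx ↦ hx.2) ha)
    obtain ⟨⟨y, hy⟩, hya⟩ := hsep.mem_range_of_pow_mem p n
      ⟨⟨_, Subfield.subset_closure (Or.inr ⟨a, rfl⟩)⟩, by simp⟩
    exact hya ▸ hy
  · refine Subfield.closure_le.2 ?_
    rintro _ (⟨c, rfl⟩ | ⟨a, rfl⟩)
    · exact ⟨algebraMap k K c, (IsScalarTower.algebraMap_apply k K Ω c).symm⟩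
    · exact ⟨a ^ p ^ n, rfl⟩
  · exact Set.union_subset_union_left _ fun _ ⟨c, hc⟩ ↦
      hc ▸ ⟨isIntegral_algebraMap, isSeparable_algebraMap c⟩

/-- `k` of characteristic `p > 0`, `K` a separably generated function field
over `k`, `k^sep` the separable closure of `k` (realized inside an algebraically closed
field `Ω ⊇ K` as the set of elements that are algebraic and separable over `k`).  Then for
every `n > 0`, `K ∩ k^sep K^{p^n} = kK^{p^n}` inside `Ω`. -/
theorem stmt5 {k K : Type*} [Field k] [Field K] [Algebra k K]
    (p : ℕ) [Fact p.Prime] [CharP K p]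
    (hsepgen : ∃ t : K, Transcendental k t ∧
      FiniteDimensional ↥(IntermediateField.adjoin k {t}) K ∧
      Algebra.IsSeparable ↥(IntermediateField.adjoin k {t}) K)
    (n : ℕ) (hn : 0 < n)
    (Ω : Type*) [Field Ω] [Algebra K Ω] [Algebra k Ω] [IsScalarTower k K Ω]
    [IsAlgClosed Ω] :
    (algebraMap K Ω).fieldRange ⊓
      Subfield.closure
        ({x : Ω | IsIntegral k x ∧ (minpoly k x).Separable} ∪
          {y : Ω | ∃ x : K, algebraMap K Ω (x ^ p ^ n) = y})
    = Subfield.closure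
        (Set.range (algebraMap k Ω) ∪
          {y : Ω | ∃ x : K, algebraMap K Ω (x ^ p ^ n) = y}) :=
  stmt5_general p n Ω
end

section
/- Let K = 𝔽_p(t) and Γ = ⟨t, −t, 1−t⟩ ⊆ K*. In the product ∏_{v∈Ω} K_v* over a cofinite set Ω of places at which t, −t, 1−t are units, the sequence (t^{p^{n!}})_{n≥1} converges to an element α of the closure of Γ that does not lie in K*; consequently (α, −α) satisfies X₁ + X₂ = 0 with coordinates in Γ̄ but there is no solution of X₁ + X₂ = 0 with both coordinates in Γ. -/
/-- A place of a function field `K/k`: a normalized discrete (additive) valuation on `K`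
trivial on `k`. -/
structure FnPlace (k K : Type*) [Field k] [Field K] [Algebra k K] where
  v : K → ℤ
  v_mul : ∀ {x y : K}, x ≠ 0 → y ≠ 0 → v (x * y) = v x + v y
  v_add : ∀ {x y : K}, x ≠ 0 → y ≠ 0 → x + y ≠ 0 → min (v x) (v y) ≤ v (x + y)
  exists_uniformizer : ∃ s : K, s ≠ 0 ∧ v s = 1
  v_const : ∀ c : k, c ≠ 0 → v (algebraMap k K c) = 0

/-!
At a place `w` of `𝔽_q(t)` where `t` is a unit, `w ≥ 0` on `𝔽_q[t]` and `w(π) ≥ 1` for some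
irreducible `π`, of degree `d` say; then `π ∣ t^{q^m} - t` whenever `d ∣ m`. Since `d ∣ i!`
eventually, Frobenius gives `t^{q^{j!}} - t^{q^{i!}} = (t^{q^{j! - i!}} - t)^{q^{i!}}`, of
valuation `≥ q^{i!}`: the sequence is Cauchy at `w`. A limit `x ∈ K` would satisfy
`w(x - t) ≥ 1` at almost every place, which forces `x = t`; but `t^{q^m} - t` is separable,
hence squarefree, so it never lies in `𝔭²`.
-/

open Polynomial IsDedekindDomain

namespace FiniteField

variable {F : Type*} [Field F] [Fintype F]

theorem X_pow_card_pow_add_sub_X_pow_card_pow (m a : ℕ) :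
    (X ^ Fintype.card F ^ (m + a) - X ^ Fintype.card F ^ a : F[X]) =
      (X ^ Fintype.card F ^ m - X) ^ Fintype.card F ^ a := by
  induction a with
  | zero => simp
  | succ a ih =>
    rw [pow_succ (Fintype.card F) a, pow_mul (X ^ Fintype.card F ^ m - X), ← ih,
      ← expand_card]
    simp only [map_sub, expand_X, map_pow, ← pow_mul, ← pow_succ, ← pow_succ', add_assoc]

theorem squarefree_X_pow_card_pow_sub_X {m : ℕ} (hm : m ≠ 0) :
    Squarefree (X ^ Fintype.card F ^ m - X : F[X]) :=
  (galois_poly_separable (ringChar F) _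
    (dvd_pow (ringChar.dvd (FiniteField.cast_card_eq_zero F)) hm)).squarefree

end FiniteField

theorem RatFunc.X_pow_card_pow_sub_X_ne_zero {F : Type*} [Field F] [Fintype F] {m : ℕ}
    (hm : m ≠ 0) : (RatFunc.X ^ Fintype.card F ^ m - RatFunc.X : RatFunc F) ≠ 0 := by
  simpa using RatFunc.algebraMap_ne_zero
    (FiniteField.X_pow_card_pow_sub_X_ne_zero F hm Fintype.one_lt_card)

namespace FnPlace

variable {k K : Type*} [Field k] [Field K] [Algebra k K] (w : FnPlace k K)

/-- `x ≡ y mod 𝔭_w^n`; equality is split off because `w.v 0` is a junk value. -/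
def ModEq (n : ℤ) (x y : K) : Prop := x = y ∨ n ≤ w.v (x - y)

theorem v_one : w.v 1 = 0 := by
  have := w.v_mul one_ne_zero one_ne_zero
  rw [mul_one] at this
  omega

theorem v_pow {x : K} (hx : x ≠ 0) (n : ℕ) : w.v (x ^ n) = n * w.v x := by
  induction n with
  | zero => simp [v_one]
  | succ n ih => rw [pow_succ, w.v_mul (pow_ne_zero n hx) hx, ih]; push_cast; ring

theorem v_neg (x : K) : w.v (-x) = w.v x := by
  rcases eq_or_ne x 0 with rfl | hx
  · rw [neg_zero]
  have h := w.v_pow (neg_ne_zero.2 (one_ne_zero (α := K))) 2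
  rw [neg_one_sq, v_one] at h
  rw [← neg_one_mul, w.v_mul (neg_ne_zero.2 one_ne_zero) hx]
  omega

namespace ModEq

variable {w} {n : ℤ} {x y z : K}

theorem symm (h : w.ModEq n x y) : w.ModEq n y x := by
  rcases h with rfl | h
  · exact Or.inl rfl
  · exact Or.inr (by rwa [← neg_sub, v_neg])

theorem trans (hxy : w.ModEq n x y) (hyz : w.ModEq n y z) : w.ModEq n x z := by
  by_cases hxy' : x = y
  · exact hxy' ▸ hyz
  by_cases hyz' : y = z
  · exact hyz' ▸ hxy
  by_cases hxz : x = z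
  · exact Or.inl hxz
  have h := w.v_add (sub_ne_zero.2 hxy') (sub_ne_zero.2 hyz')
    (by rw [sub_add_sub_cancel]; exact sub_ne_zero.2 hxz)
  rw [sub_add_sub_cancel] at h
  exact Or.inr ((le_min (hxy.resolve_left hxy') (hyz.resolve_left hyz')).trans h)

end ModEq

section RatFunc

variable {F : Type*} [Field F] (w : FnPlace F (RatFunc F))

theorem v_algebraMap_C {a : F} (ha : a ≠ 0) : w.v (algebraMap F[X] (RatFunc F) (C a)) = 0 := by
  rw [← Polynomial.algebraMap_eq, ← IsScalarTower.algebraMap_apply]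
  exact w.v_const a ha

theorem v_algebraMap_num {y : RatFunc F} (hy : y ≠ 0) :
    w.v (algebraMap F[X] (RatFunc F) y.num) =
      w.v y + w.v (algebraMap F[X] (RatFunc F) y.denom) := by
  have hden := RatFunc.algebraMap_ne_zero y.denom_ne_zero
  rw [(div_eq_iff hden).1 (RatFunc.num_div_denom y), w.v_mul hy hden]

theorem v_algebraMap_nonneg (hX : w.v RatFunc.X = 0) {f : F[X]} (hf : f ≠ 0) :
    0 ≤ w.v (algebraMap F[X] (RatFunc F) f) := by
  suffices h : f = 0 ∨ 0 ≤ w.v (algebraMap F[X] (RatFunc F) f) from h.resolve_left hf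
  clear hf
  induction f using Polynomial.induction_on' with
  | monomial n a =>
    rcases eq_or_ne a 0 with rfl | ha
    · simp
    right
    rw [← C_mul_X_pow_eq_monomial, map_mul, map_pow, RatFunc.algebraMap_X,
      w.v_mul (by simpa using ha) (pow_ne_zero _ RatFunc.X_ne_zero),
      w.v_pow RatFunc.X_ne_zero, hX, w.v_algebraMap_C ha]
    simp
  | add f g hf hg =>
    by_cases hf0 : f = 0
    · simpa [hf0] using hg
    by_cases hg0 : g = 0
    · simpa [hg0] using hf
    by_cases hfg : f + g = 0
    · exact Or.inl hfg
    have h := w.v_add (x := algebraMap F[X] (RatFunc F) f) (y := algebraMap F[X] (RatFunc F) g)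
      (RatFunc.algebraMap_ne_zero hf0) (RatFunc.algebraMap_ne_zero hg0)
      (by rw [← map_add]; exact RatFunc.algebraMap_ne_zero hfg)
    rw [← map_add] at h
    exact Or.inr ((le_min (hf.resolve_left hf0) (hg.resolve_left hg0)).trans h)

theorem one_le_v_of_dvd (hX : w.v RatFunc.X = 0) {π f : F[X]}
    (hπ : 1 ≤ w.v (algebraMap F[X] (RatFunc F) π)) (hdvd : π ∣ f) (hf : f ≠ 0) :
    1 ≤ w.v (algebraMap F[X] (RatFunc F) f) := by
  obtain ⟨g, rfl⟩ := hdvd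
  have hg : g ≠ 0 := right_ne_zero_of_mul hf
  rw [map_mul, w.v_mul (RatFunc.algebraMap_ne_zero (left_ne_zero_of_mul hf))
    (RatFunc.algebraMap_ne_zero hg)]
  linarith [w.v_algebraMap_nonneg hX hg]

theorem exists_irreducible_one_le_v (hX : w.v RatFunc.X = 0) :
    ∃ π : F[X], Irreducible π ∧ 1 ≤ w.v (algebraMap F[X] (RatFunc F) π) := by
  obtain ⟨s, hs0, hs1⟩ := w.exists_uniformizer
  have hnum : 1 ≤ w.v (algebraMap F[X] (RatFunc F) s.num) := by
    rw [w.v_algebraMap_num hs0, hs1]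
    linarith [w.v_algebraMap_nonneg hX s.denom_ne_zero]
  suffices h : ∀ f : F[X], f ≠ 0 → 1 ≤ w.v (algebraMap F[X] (RatFunc F) f) →
      ∃ π : F[X], Irreducible π ∧ 1 ≤ w.v (algebraMap F[X] (RatFunc F) π) from
    h _ (RatFunc.num_ne_zero hs0) hnum
  intro f
  induction f using WfDvdMonoid.induction_on_irreducible with
  | zero => exact fun h => absurd rfl h
  | unit u hu =>
    obtain ⟨c, hc, rfl⟩ := Polynomial.isUnit_iff.1 hu
    rw [w.v_algebraMap_C hc.ne_zero]
    omega
  | mul f π hf hπ ih =>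
    intro hπf h
    rw [map_mul, w.v_mul (RatFunc.algebraMap_ne_zero hπ.ne_zero)
      (RatFunc.algebraMap_ne_zero hf)] at h
    by_cases hπ1 : 1 ≤ w.v (algebraMap F[X] (RatFunc F) π)
    · exact ⟨π, hπ, hπ1⟩
    · exact ih hf (by omega)

end RatFunc

section FiniteField

variable {F : Type*} [Field F] [Fintype F] (w : FnPlace F (RatFunc F))

theorem exists_one_le_v_X_pow_card_pow_sub_X (hX : w.v RatFunc.X = 0) :
    ∃ d, 0 < d ∧ ∀ m, d ∣ m → m ≠ 0 →
      1 ≤ w.v (RatFunc.X ^ Fintype.card F ^ m - RatFunc.X) := by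
  obtain ⟨π, hπ, hπv⟩ := w.exists_irreducible_one_le_v hX
  refine ⟨π.natDegree, hπ.natDegree_pos, fun m hd hm => ?_⟩
  have hdvd := hπ.natDegree_dvd_iff_dvd_X_pow_card_pow_sub_X.1 hd
  rw [Nat.card_eq_fintype_card] at hdvd
  simpa using w.one_le_v_of_dvd hX hπv hdvd
    (FiniteField.X_pow_card_pow_sub_X_ne_zero F hm Fintype.one_lt_card)

theorem exists_le_v_X_pow_card_pow_factorial_sub (hX : w.v RatFunc.X = 0) (n : ℤ) :
    ∃ N, ∀ i j : ℕ, N ≤ i → i < j →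
      n ≤ w.v (RatFunc.X ^ Fintype.card F ^ j.factorial -
        RatFunc.X ^ Fintype.card F ^ i.factorial) := by
  obtain ⟨d, hd, hdv⟩ := w.exists_one_le_v_X_pow_card_pow_sub_X hX
  refine ⟨max d n.toNat, fun i j hi hij => ?_⟩
  have hfac : i.factorial < j.factorial := (Nat.factorial_lt (by omega)).2 hij
  have hm : j.factorial - i.factorial ≠ 0 := by omega
  have hdm : d ∣ j.factorial - i.factorial :=
    Nat.dvd_sub (Nat.dvd_factorial hd (by omega)) (Nat.dvd_factorial hd (by omega))
  have hfrob := congrArg (algebraMap F[X] (RatFunc F))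
    (FiniteField.X_pow_card_pow_add_sub_X_pow_card_pow (F := F)
      (j.factorial - i.factorial) i.factorial)
  rw [Nat.sub_add_cancel hfac.le] at hfrob
  simp only [map_sub, map_pow, RatFunc.algebraMap_X] at hfrob
  rw [hfrob, w.v_pow (RatFunc.X_pow_card_pow_sub_X_ne_zero hm)]
  have hq : n ≤ (Fintype.card F ^ i.factorial : ℕ) := by
    have h1 := Nat.lt_pow_self (n := i) (Fintype.one_lt_card (α := F))
    have h2 := Nat.pow_le_pow_right (Fintype.card_pos (α := F)) (Nat.self_le_factorial i)
    omega
  nlinarith [hdv _ hdm hm]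

theorem exists_modEq_X_pow_card_pow_factorial (hX : w.v RatFunc.X = 0) (n : ℤ) :
    ∃ N, ∀ i j : ℕ, N ≤ i → N ≤ j → w.ModEq n
      (RatFunc.X ^ Fintype.card F ^ i.factorial) (RatFunc.X ^ Fintype.card F ^ j.factorial) := by
  obtain ⟨N, hN⟩ := w.exists_le_v_X_pow_card_pow_factorial_sub hX n
  refine ⟨N, fun i j hi hj => ?_⟩
  rcases lt_trichotomy i j with hij | rfl | hji
  · exact ModEq.symm (Or.inr (hN i j hi hij))
  · exact Or.inl rfl
  · exact Or.inr (hN j i hj hji)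

theorem exists_modEq_one_X_pow_card_pow_factorial_X (hX : w.v RatFunc.X = 0) :
    ∃ N : ℕ, ∀ i ≥ N, w.ModEq 1 (RatFunc.X ^ Fintype.card F ^ i.factorial) RatFunc.X := by
  obtain ⟨d, hd, hdv⟩ := w.exists_one_le_v_X_pow_card_pow_sub_X hX
  exact ⟨d, fun i hi => Or.inr (hdv _ (Nat.dvd_factorial hd hi) (Nat.factorial_ne_zero i))⟩

end FiniteField
end FnPlace

namespace IsDedekindDomain.HeightOneSpectrum

variable {F : Type*} [Field F]

noncomputable def toFnPlace (v : HeightOneSpectrum F[X]) : FnPlace F (RatFunc F) where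
  v x := -WithZero.log (v.valuation (RatFunc F) x)
  v_mul hx hy := by
    rw [map_mul,
      WithZero.log_mul ((Valuation.ne_zero_iff _).2 hx) ((Valuation.ne_zero_iff _).2 hy)]
    ring
  v_add {x y} hx hy hxy := by
    rw [min_neg_neg, neg_le_neg_iff]
    have hne {z : RatFunc F} (hz : z ≠ 0) :=
      (Valuation.ne_zero_iff (v.valuation (RatFunc F))).2 hz
    rcases le_max_iff.1 ((v.valuation (RatFunc F)).map_add x y) with h | h
    · exact le_max_of_le_left ((WithZero.log_le_log (hne hxy) (hne hx)).2 h)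
    · exact le_max_of_le_right ((WithZero.log_le_log (hne hxy) (hne hy)).2 h)
  exists_uniformizer := by
    obtain ⟨π, hπ⟩ := v.valuation_exists_uniformizer (RatFunc F)
    exact ⟨π, fun h => WithZero.exp_ne_zero (by rw [← hπ, h, map_zero]), by simp [hπ]⟩
  v_const c hc := by
    have hC : C c ∉ v.asIdeal := fun h =>
      v.isPrime.ne_top (Ideal.eq_top_of_isUnit_mem _ h (isUnit_C.2 (Ne.isUnit hc)))
    rw [IsScalarTower.algebraMap_apply F F[X] (RatFunc F), Polynomial.algebraMap_eq,
      (v.valuation_eq_one_iff_notMem (K := RatFunc F)).2 hC, WithZero.log_one, neg_zero]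

theorem le_toFnPlace_v_algebraMap_iff (v : HeightOneSpectrum F[X]) {r : F[X]} (hr : r ≠ 0)
    (n : ℕ) : (n : ℤ) ≤ v.toFnPlace.v (algebraMap F[X] (RatFunc F) r) ↔ r ∈ v.asIdeal ^ n := by
  have hne : v.valuation (RatFunc F) (algebraMap F[X] (RatFunc F) r) ≠ 0 :=
    (Valuation.ne_zero_iff _).2 (RatFunc.algebraMap_ne_zero hr)
  rw [← intValuation_le_pow_iff_mem, ← valuation_of_algebraMap (K := RatFunc F),
    ← WithZero.log_le_iff_le_exp hne]
  exact le_neg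

theorem toFnPlace_injective :
    Function.Injective (toFnPlace : HeightOneSpectrum F[X] → FnPlace F (RatFunc F)) := by
  intro v v' h
  ext r
  rcases eq_or_ne r 0 with rfl | hr
  · simp only [Submodule.zero_mem]
  rw [← pow_one v.asIdeal, ← pow_one v'.asIdeal, ← le_toFnPlace_v_algebraMap_iff v hr,
    ← le_toFnPlace_v_algebraMap_iff v' hr, h]

theorem finite_setOf_one_le_toFnPlace_v {y : RatFunc F} (hy : y ≠ 0) :
    {v : HeightOneSpectrum F[X] | 1 ≤ v.toFnPlace.v y}.Finite := by
  refine (Ideal.finite_factors (I := Ideal.span {y.num}) ?_).subset fun v hv => ?_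
  · simpa using RatFunc.num_ne_zero hy
  have hden := (le_toFnPlace_v_algebraMap_iff v y.denom_ne_zero 0).2 (by simp)
  have hnum : ((1 : ℕ) : ℤ) ≤ v.toFnPlace.v (algebraMap F[X] (RatFunc F) y.num) := by
    rw [v.toFnPlace.v_algebraMap_num hy]
    push_cast at hden ⊢
    exact le_add_of_le_of_nonneg hv hden
  rw [Set.mem_ofPred, Ideal.dvd_span_singleton, ← pow_one v.asIdeal]
  exact (le_toFnPlace_v_algebraMap_iff v (RatFunc.num_ne_zero hy) 1).1 hnum

theorem toFnPlace_v_algebraMap_lt_two (v : HeightOneSpectrum F[X]) {f : F[X]}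
    (hf : Squarefree f) : v.toFnPlace.v (algebraMap F[X] (RatFunc F) f) < 2 := by
  by_contra! h
  have hmem := (le_toFnPlace_v_algebraMap_iff v hf.ne_zero 2).1 h
  obtain ⟨g, hg⟩ := Submodule.IsPrincipal.principal v.asIdeal
  rw [hg, Ideal.submodule_span_eq, Ideal.span_singleton_pow, Ideal.mem_span_singleton, sq] at hmem
  refine v.isPrime.ne_top ?_
  rw [hg, Ideal.submodule_span_eq, Ideal.span_singleton_eq_top]
  exact hf g hmem

/-- Euclid: a maximal ideal containing `1 + X * ∏ v, g v` with `g v ∈ v` is none of the `v`. -/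
instance : Infinite (HeightOneSpectrum F[X]) := by
  refine Infinite.of_not_fintype fun _ => ?_
  choose g hg hg0 using fun v : HeightOneSpectrum F[X] =>
    Submodule.exists_mem_ne_zero_of_ne_bot v.ne_bot
  have hf : (X * ∏ v, g v) ≠ 0 :=
    mul_ne_zero X_ne_zero (Finset.prod_ne_zero_iff.2 fun v _ => hg0 v)
  have hunit : ¬IsUnit (C 1 + X * ∏ v, g v) := fun hu => by
    have := natDegree_eq_zero_of_isUnit hu
    rw [natDegree_C_add, natDegree_X_mul (right_ne_zero_of_mul hf)] at this
    omega
  obtain ⟨M, hM, hle⟩ := Ideal.exists_le_maximal _ (Ideal.span_singleton_ne_top hunit)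
  have h1 : C 1 + X * ∏ v, g v ∈ M := hle (Ideal.mem_span_singleton_self _)
  let v : HeightOneSpectrum F[X] :=
    ⟨M, hM.isPrime, (Ideal.bot_lt_of_maximal M (Polynomial.not_isField F)).ne'⟩
  have hfM : X * ∏ v, g v ∈ M :=
    M.mul_mem_left X (M.mem_of_dvd (Finset.dvd_prod_of_mem g (Finset.mem_univ v)) (hg v))
  rw [M.add_mem_iff_left hfM, C_1] at h1
  exact hM.ne_top ((Ideal.eq_top_iff_one M).2 h1)

end IsDedekindDomain.HeightOneSpectrum

namespace FnPlace

variable {F : Type*} [Field F] [Fintype F]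

theorem not_exists_forall_modEq_X_pow_card_pow_factorial (Ω : Set (FnPlace F (RatFunc F)))
    (hΩ : Ωᶜ.Finite) (hX : ∀ w ∈ Ω, w.v RatFunc.X = 0) :
    ¬∃ x : RatFunc F, ∀ w ∈ Ω, ∀ n : ℤ, ∃ N : ℕ, ∀ i ≥ N,
      w.ModEq n (RatFunc.X ^ Fintype.card F ^ i.factorial) x := by
  rintro ⟨x, hx⟩
  have hS : (HeightOneSpectrum.toFnPlace ⁻¹' Ω).Infinite := by
    simpa only [Set.preimage_compl, compl_compl] using
      (hΩ.preimage HeightOneSpectrum.toFnPlace_injective.injOn).infinite_compl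
  by_cases hxX : x = RatFunc.X
  · subst hxX
    obtain ⟨v, hv⟩ := hS.nonempty
    obtain ⟨N, hN⟩ := hx _ hv 2
    have hfac := Nat.factorial_ne_zero N
    have hlt :=
      v.toFnPlace_v_algebraMap_lt_two (FiniteField.squarefree_X_pow_card_pow_sub_X hfac)
    simp only [map_sub, map_pow, RatFunc.algebraMap_X] at hlt
    have hle := (hN N le_rfl).resolve_left
      (sub_ne_zero.1 (RatFunc.X_pow_card_pow_sub_X_ne_zero hfac))
    omega
  refine hS ((HeightOneSpectrum.finite_setOf_one_le_toFnPlace_v (sub_ne_zero.2 hxX)).subset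
    fun v hv => ?_)
  obtain ⟨N₁, h₁⟩ := hx _ hv 1
  obtain ⟨N₂, h₂⟩ := v.toFnPlace.exists_modEq_one_X_pow_card_pow_factorial_X (hX _ hv)
  exact ((h₁ _ (le_max_left N₁ N₂)).symm.trans (h₂ _ (le_max_right N₁ N₂))).resolve_left
    hxX

end FnPlace

theorem stmt16_general (p : ℕ) [Fact p.Prime]
    (Γ : Subgroup (RatFunc (ZMod p))ˣ)
    (Ω : Set (FnPlace (ZMod p) (RatFunc (ZMod p))))
    (hΩcofin : Ωᶜ.Finite)
    (hΩunits : ∀ w ∈ Ω, w.v (RatFunc.X : RatFunc (ZMod p)) = 0 ∧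
      w.v (1 - RatFunc.X : RatFunc (ZMod p)) = 0) :
    (∀ w ∈ Ω, ∀ n : ℤ, ∃ N : ℕ, ∀ i i' : ℕ, N ≤ i → N ≤ i' →
      ((RatFunc.X : RatFunc (ZMod p)) ^ p ^ (Nat.factorial i) = RatFunc.X ^ p ^ (Nat.factorial i') ∨
        n ≤ w.v ((RatFunc.X : RatFunc (ZMod p)) ^ p ^ (Nat.factorial i) - RatFunc.X ^ p ^ (Nat.factorial i')))) ∧
    (¬ ∃ x : RatFunc (ZMod p), x ≠ 0 ∧ ∀ w ∈ Ω, ∀ n : ℤ, ∃ N : ℕ, ∀ i ≥ N,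
      ((RatFunc.X : RatFunc (ZMod p)) ^ p ^ (Nat.factorial i) = x ∨
        n ≤ w.v ((RatFunc.X : RatFunc (ZMod p)) ^ p ^ (Nat.factorial i) - x))) ∧
    (¬ ∃ x y : (RatFunc (ZMod p))ˣ, x ∈ Γ ∧ y ∈ Γ ∧
      (x : RatFunc (ZMod p)) + (y : RatFunc (ZMod p)) = 0 ∧
      (∀ w ∈ Ω, ∀ n : ℤ, ∃ N : ℕ, ∀ i ≥ N,
        ((RatFunc.X : RatFunc (ZMod p)) ^ p ^ (Nat.factorial i) = (x : RatFunc (ZMod p)) ∨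
          n ≤ w.v ((RatFunc.X : RatFunc (ZMod p)) ^ p ^ (Nat.factorial i) - (x : RatFunc (ZMod p)))))) := by
  have hlimit := FnPlace.not_exists_forall_modEq_X_pow_card_pow_factorial Ω hΩcofin
    fun w hw => (hΩunits w hw).1
  rw [ZMod.card] at hlimit
  refine ⟨fun w hw n => ?_, fun ⟨x, _, hx⟩ => hlimit ⟨x, hx⟩,
    fun ⟨x, _, _, _, _, hx⟩ => hlimit ⟨x, hx⟩⟩
  have hcauchy := w.exists_modEq_X_pow_card_pow_factorial (hΩunits w hw).1 n
  rwa [ZMod.card] at hcauchy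

/-- Example `x_plus_y` of the paper.  `K = 𝔽_p(t)` (with `t = X`),
`Γ = ⟨t, −t, 1−t⟩ ⊆ K*`, and `Ω` a cofinite set of places of `K/𝔽_p` at which `t` and
`1 − t` (hence also `−t`) are units.  Then, with respect to the product topology of
`∏_{v ∈ Ω} K_v*`:  (a) the sequence `(t^{p^{n!}})_n` is Cauchy at every `v ∈ Ω`, so it
converges to an element `α` of the closure `Γ̄` of `Γ`;  (b) it does not converge at all
`v ∈ Ω` to a single element of `K*`, i.e. `α ∉ K*`;  consequently (c) `(α, −α)` satisfies
`X₁ + X₂ = 0` with coordinates in `Γ̄`, but it is not a solution with both coordinates in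
`Γ`: there is no `(x, y) ∈ Γ × Γ` with `x + y = 0` and `x = α`. -/
theorem stmt16 (p : ℕ) [Fact p.Prime]
    (Γ : Subgroup (RatFunc (ZMod p))ˣ)
    (hΓ : Γ = Subgroup.closure
      {u : (RatFunc (ZMod p))ˣ |
        (u : RatFunc (ZMod p)) = RatFunc.X ∨
        (u : RatFunc (ZMod p)) = -RatFunc.X ∨
        (u : RatFunc (ZMod p)) = 1 - RatFunc.X})
    (Ω : Set (FnPlace (ZMod p) (RatFunc (ZMod p))))
    (hΩcofin : Ωᶜ.Finite)
    (hΩunits : ∀ w ∈ Ω, w.v (RatFunc.X : RatFunc (ZMod p)) = 0 ∧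
      w.v (1 - RatFunc.X : RatFunc (ZMod p)) = 0) :
    (∀ w ∈ Ω, ∀ n : ℤ, ∃ N : ℕ, ∀ i i' : ℕ, N ≤ i → N ≤ i' →
      ((RatFunc.X : RatFunc (ZMod p)) ^ p ^ (Nat.factorial i) = RatFunc.X ^ p ^ (Nat.factorial i') ∨
        n ≤ w.v ((RatFunc.X : RatFunc (ZMod p)) ^ p ^ (Nat.factorial i) - RatFunc.X ^ p ^ (Nat.factorial i')))) ∧
    (¬ ∃ x : RatFunc (ZMod p), x ≠ 0 ∧ ∀ w ∈ Ω, ∀ n : ℤ, ∃ N : ℕ, ∀ i ≥ N,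
      ((RatFunc.X : RatFunc (ZMod p)) ^ p ^ (Nat.factorial i) = x ∨
        n ≤ w.v ((RatFunc.X : RatFunc (ZMod p)) ^ p ^ (Nat.factorial i) - x))) ∧
    (¬ ∃ x y : (RatFunc (ZMod p))ˣ, x ∈ Γ ∧ y ∈ Γ ∧
      (x : RatFunc (ZMod p)) + (y : RatFunc (ZMod p)) = 0 ∧
      (∀ w ∈ Ω, ∀ n : ℤ, ∃ N : ℕ, ∀ i ≥ N,
        ((RatFunc.X : RatFunc (ZMod p)) ^ p ^ (Nat.factorial i) = (x : RatFunc (ZMod p)) ∨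
          n ≤ w.v ((RatFunc.X : RatFunc (ZMod p)) ^ p ^ (Nat.factorial i) - (x : RatFunc (ZMod p)))))) :=
  stmt16_general p Γ Ω hΩcofin hΩunits
end
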